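/- arXiv:2007.15623 — 2 statements merged into one kernel-verified Lean document; each statement's English description precedes it below -/
import Mathlib

section
/- Let F denote the closed unit ball of the generalized Barron space B_{X,K}. Then for every finite sample set S = {x_1,…,x_N} ⊆ K, the Rademacher complexity satisfies Rad(F; S) ≤ 2 · Rad(B^X; S), where B^X is the closed unit ball of X. -/
open MeasureTheory Set Filter Topology
open scoped ENNReal NNReal Classical

noncomputable section

/-- The rectified linear unit. -/
def relu (z : ℝ) : ℝ := max z 0

/-- The Borel σ-algebra on `C(K, ℝ)` for the topology of uniform convergence
(= compact-open topology for compact `K`). -/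
instance ctsMeasurableSpace {d : ℕ} (K : Set (Fin d → ℝ)) : MeasurableSpace C(K, ℝ) := borel _

/-- `(μp, μn)` is a (Jordan-decomposed) signed-measure representation of `f` over the
class `H ⊆ C(K, ℝ)`: both parts are finite measures concentrated on `H`, and
`f x = ∫ relu (g x) dμp - ∫ relu (g x) dμn` for every `x ∈ K`. -/
def IsBarronRep {d : ℕ} (K : Set (Fin d → ℝ)) (H : Set C(K, ℝ)) (f : C(K, ℝ))
    (μp μn : Measure C(K, ℝ)) : Prop :=
  IsFiniteMeasure μp ∧ IsFiniteMeasure μn ∧ μp Hᶜ = 0 ∧ μn Hᶜ = 0 ∧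
    ∀ x : K, f x = (∫ g : C(K, ℝ), relu (g x) ∂μp) - ∫ g : C(K, ℝ), relu (g x) ∂μn

/-- The generalized Barron norm `‖f‖_{X,K}`, where `H` plays the role of the closed unit
ball `B^X` (realized inside `C(K,ℝ)`): the infimum of the total variation mass over all
signed-measure representations of `f`. -/
def barronNorm {d : ℕ} (K : Set (Fin d → ℝ)) (H : Set C(K, ℝ)) (f : C(K, ℝ)) : ℝ≥0∞ :=
  ⨅ p : {p : Measure C(K, ℝ) × Measure C(K, ℝ) // IsBarronRep K H f p.1 p.2},
    p.1.1 Set.univ + p.1.2 Set.univ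

/-- The Rademacher complexity `Rad(H; S) = E_ξ [ sup_{h ∈ H} (1/N) Σᵢ ξᵢ h(xᵢ) ]`
of a class `H` of real-valued functions on a sample `S = (x_1, …, x_N)`, where the `ξᵢ`
are i.i.d. uniform random signs (the expectation is the average over all `2^N` sign
patterns); valued in `EReal` to handle unbounded classes. -/
def rademacher {α : Type*} {N : ℕ} (H : Set (α → ℝ)) (S : Fin N → α) : EReal :=
  (((2 ^ N : ℝ)⁻¹ : ℝ) : EReal) *
    ∑ ξ : Fin N → Bool,
      ⨆ h ∈ H, ((((N : ℝ))⁻¹ * ∑ i : Fin N, (if ξ i then (1 : ℝ) else -1) * h (S i) : ℝ) : EReal)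

end

/-! Take a representation `f = ∫ σ(g) dμ⁺ - ∫ σ(g) dμ⁻` of total mass close to `‖f‖ ≤ 1`. Each
correlation `(1/N) Σᵢ ξᵢ f(xᵢ)` is then at most `R(ξ) + R(-ξ)`, where
`R(ξ) = sup_{g ∈ B^X} (1/N) Σᵢ ξᵢ σ(g(xᵢ))`, and `ξ ↦ -ξ` preserves the uniform law of the signs,
so `Rad(F; S) ≤ 2 E R`. The contraction principle for the 1-Lipschitz `σ` gives `E R ≤ Rad(B^X; S)`;
it is proved by removing `σ` from one coordinate at a time, pairing each sign pattern with the one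
that differs from it in that coordinate. -/

noncomputable section Contraction

open Function Finset

variable {N : ℕ}

def boolSign (b : Bool) : ℝ := if b then 1 else -1

lemma boolSign_not (b : Bool) : boolSign (!b) = -boolSign b := by
  cases b <;> simp [boolSign]

lemma abs_boolSign (b : Bool) : |boolSign b| = 1 := by
  cases b <;> simp [boolSign]

/-- The summand of `rademacher`, as a function of the sample values `y i = h (S i)`. -/
def sampleCorr (ξ : Fin N → Bool) (y : Fin N → ℝ) : ℝ :=
  (N : ℝ)⁻¹ * ∑ i, boolSign (ξ i) * y i

lemma sampleCorr_not (ξ : Fin N → Bool) (y : Fin N → ℝ) :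
    sampleCorr (fun i => !ξ i) y = -sampleCorr ξ y := by
  simp only [sampleCorr, boolSign_not, neg_mul, sum_neg_distrib, mul_neg]

lemma abs_sampleCorr_le (ξ : Fin N → Bool) (y : Fin N → ℝ) : |sampleCorr ξ y| ≤ ‖y‖ := by
  have hterm : ∀ i, |boolSign (ξ i) * y i| ≤ ‖y‖ := fun i => by
    rw [abs_mul, abs_boolSign, one_mul, ← Real.norm_eq_abs]
    exact norm_le_pi_norm y i
  calc |sampleCorr ξ y| = (N : ℝ)⁻¹ * |∑ i, boolSign (ξ i) * y i| := by
        rw [sampleCorr, abs_mul, abs_of_nonneg (by positivity)]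
    _ ≤ (N : ℝ)⁻¹ * (N * ‖y‖) := by
        gcongr
        simpa using (abs_sum_le_sum_abs _ Finset.univ).trans (sum_le_sum fun i _ => hterm i)
    _ ≤ ‖y‖ := by
        rw [← mul_assoc]
        exact mul_le_of_le_one_left (norm_nonneg y) (inv_mul_le_one_of_le₀ le_rfl (by positivity))

lemma bddAbove_range_sampleCorr {α : Type*} {v : α → Fin N → ℝ} {C : ℝ} (hv : ∀ x, ‖v x‖ ≤ C)
    (ξ : Fin N → Bool) : BddAbove (Set.range fun x => sampleCorr ξ (v x)) :=
  ⟨C, by rintro _ ⟨x, rfl⟩; exact (le_abs_self _).trans ((abs_sampleCorr_le ξ (v x)).trans (hv x))⟩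

lemma sampleCorr_eq_update_zero_add (ξ : Fin N → Bool) (y : Fin N → ℝ) (a : Fin N) :
    sampleCorr ξ y = sampleCorr ξ (update y a 0) + (N : ℝ)⁻¹ * boolSign (ξ a) * y a := by
  simp only [sampleCorr, Fintype.sum_eq_add_sum_compl a, update_self, mul_zero, zero_add]
  rw [mul_add, add_comm, mul_assoc]
  congr 2
  refine sum_congr rfl fun i hi => ?_
  rw [update_of_ne (by simpa using hi)]

def flipAt (a : Fin N) (ξ : Fin N → Bool) : Fin N → Bool := update ξ a (!ξ a)

lemma flipAt_involutive (a : Fin N) : Involutive (flipAt a) := fun ξ => by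
  funext i
  by_cases h : i = a
  · subst h; simp [flipAt]
  · simp [flipAt, update_of_ne h]

lemma sampleCorr_flipAt_update_zero (a : Fin N) (ξ : Fin N → Bool) (y : Fin N → ℝ) :
    sampleCorr (flipAt a ξ) (update y a 0) = sampleCorr ξ (update y a 0) := by
  unfold sampleCorr
  congr 1
  refine sum_congr rfl fun i _ => ?_
  by_cases h : i = a
  · subst h; simp
  · simp [flipAt, update_of_ne h]

lemma sum_le_sum_of_involutive_add_le {β : Type*} [Fintype β] {σ : β → β} (hσ : Involutive σ)
    {F G : β → ℝ} (h : ∀ b, F b + F (σ b) ≤ G b + G (σ b)) : ∑ b, F b ≤ ∑ b, G b := by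
  have hσF : ∑ b, F (σ b) = ∑ b, F b := Equiv.sum_comp hσ.toPerm F
  have hσG : ∑ b, G (σ b) = ∑ b, G b := Equiv.sum_comp hσ.toPerm G
  have := sum_le_sum fun b (_ : b ∈ Finset.univ) => h b
  rw [sum_add_distrib, sum_add_distrib, hσF, hσG] at this
  linarith

lemma iSup_add_iSup_le_of_lipschitzWith {α : Type*} [Nonempty α] {φ : ℝ → ℝ}
    (hφ : LipschitzWith 1 φ) (b t : α → ℝ) (c : ℝ)
    (hplus : BddAbove (Set.range fun x => b x + c * t x))
    (hminus : BddAbove (Set.range fun x => b x - c * t x)) :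
    (⨆ x, b x + c * φ (t x)) + (⨆ x, b x - c * φ (t x))
      ≤ (⨆ x, b x + c * t x) + ⨆ x, b x - c * t x := by
  refine ciSup_add_ciSup_le fun x y => ?_
  have hlip : c * (φ (t x) - φ (t y)) ≤ max (c * t x - c * t y) (-(c * t x - c * t y)) := by
    rw [← abs_eq_max_neg, ← mul_sub, abs_mul]
    refine (le_abs_self _).trans ?_
    rw [abs_mul]
    refine mul_le_mul_of_nonneg_left ?_ (abs_nonneg c)
    simpa [Real.dist_eq] using hφ.dist_le_mul (t x) (t y)
  have := le_ciSup hplus x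
  have := le_ciSup hminus y
  have := le_ciSup hplus y
  have := le_ciSup hminus x
  rcases le_max_iff.1 hlip with h | h <;> linarith

lemma sum_iSup_sampleCorr_update_le {α : Type*} [Nonempty α] {φ : ℝ → ℝ}
    (hφ : LipschitzWith 1 φ) {v : α → Fin N → ℝ}
    (hv : ∀ ξ, BddAbove (Set.range fun x => sampleCorr ξ (v x))) (a : Fin N) :
    ∑ ξ, ⨆ x, sampleCorr ξ (update (v x) a (φ (v x a))) ≤ ∑ ξ, ⨆ x, sampleCorr ξ (v x) := by
  refine sum_le_sum_of_involutive_add_le (flipAt_involutive a) fun ξ => ?_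
  set b : α → ℝ := fun x => sampleCorr ξ (update (v x) a 0)
  set c : ℝ := (N : ℝ)⁻¹ * boolSign (ξ a)
  have hξ (y : Fin N → ℝ) : sampleCorr ξ y = sampleCorr ξ (update y a 0) + c * y a :=
    sampleCorr_eq_update_zero_add ξ y a
  have hflip (y : Fin N → ℝ) :
      sampleCorr (flipAt a ξ) y = sampleCorr ξ (update y a 0) - c * y a := by
    rw [sampleCorr_eq_update_zero_add _ y a, sampleCorr_flipAt_update_zero, flipAt, update_self,
      boolSign_not]
    ring
  have hξv : (fun x => sampleCorr ξ (v x)) = fun x => b x + c * v x a := funext fun x => hξ (v x)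
  have hflipv : (fun x => sampleCorr (flipAt a ξ) (v x)) = fun x => b x - c * v x a :=
    funext fun x => hflip (v x)
  calc (⨆ x, sampleCorr ξ (update (v x) a (φ (v x a))))
        + ⨆ x, sampleCorr (flipAt a ξ) (update (v x) a (φ (v x a)))
      = (⨆ x, b x + c * φ (v x a)) + ⨆ x, b x - c * φ (v x a) := by
        congr 1 <;> refine iSup_congr fun x => ?_
        · rw [hξ, update_idem, update_self]
        · rw [hflip, update_idem, update_self]
    _ ≤ (⨆ x, b x + c * v x a) + ⨆ x, b x - c * v x a :=
        iSup_add_iSup_le_of_lipschitzWith hφ b (fun x => v x a) c (hξv ▸ hv ξ)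
          (hflipv ▸ hv (flipAt a ξ))
    _ = (⨆ x, sampleCorr ξ (v x)) + ⨆ x, sampleCorr (flipAt a ξ) (v x) := by rw [hξv, hflipv]

lemma norm_piecewise_comp_le {φ : ℝ → ℝ} (hφ : LipschitzWith 1 φ) (A : Finset (Fin N))
    (y : Fin N → ℝ) : ‖A.piecewise (fun i => φ (y i)) y‖ ≤ ‖φ 0‖ + ‖y‖ := by
  refine (pi_norm_le_iff_of_nonneg (by positivity)).2 fun i => ?_
  have hyi := norm_le_pi_norm y i
  by_cases hi : i ∈ A
  · have := hφ.dist_le_mul (y i) 0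
    simp only [NNReal.coe_one, one_mul, dist_zero_right] at this
    rw [Finset.piecewise_eq_of_mem _ _ _ hi]
    linarith [norm_le_norm_add_norm_sub' (φ (y i)) (φ 0), dist_eq_norm (φ (y i)) (φ 0)]
  · rw [Finset.piecewise_eq_of_notMem _ _ _ hi]
    linarith [norm_nonneg (φ 0)]

theorem sum_iSup_sampleCorr_comp_le {α : Type*} [Nonempty α] {φ : ℝ → ℝ}
    (hφ : LipschitzWith 1 φ) {v : α → Fin N → ℝ} {C : ℝ} (hv : ∀ x, ‖v x‖ ≤ C) :
    ∑ ξ, ⨆ x, sampleCorr ξ (fun i => φ (v x i)) ≤ ∑ ξ, ⨆ x, sampleCorr ξ (v x) := by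
  classical
  suffices h : ∀ A : Finset (Fin N),
      ∑ ξ, ⨆ x, sampleCorr ξ (A.piecewise (fun i => φ (v x i)) (v x))
        ≤ ∑ ξ, ⨆ x, sampleCorr ξ (v x) by
    simpa using h Finset.univ
  intro A
  induction A using Finset.induction with
  | empty => simp
  | insert a A ha ih =>
    refine le_trans (le_of_eq ?_) ((sum_iSup_sampleCorr_update_le hφ (fun ξ =>
      bddAbove_range_sampleCorr (fun x => (norm_piecewise_comp_le hφ A (v x)).trans
        (add_le_add_right (hv x) _)) ξ) a).trans ih)
    simp only [Finset.piecewise_insert, Finset.piecewise_eq_of_notMem _ _ _ ha]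

end Contraction

noncomputable section Barron

open Finset

variable {d N : ℕ} {K : Set (Fin d → ℝ)}

instance : BorelSpace C(K, ℝ) := ⟨rfl⟩

lemma lipschitzWith_relu : LipschitzWith 1 relu := LipschitzWith.id.max_const 0

lemma abs_relu_le (z : ℝ) : |relu z| ≤ |z| := by
  rw [relu, abs_of_nonneg (le_max_right z 0)]
  exact max_le (le_abs_self z) (abs_nonneg z)

lemma sampleCorr_eq_sum_mul (ξ : Fin N → Bool) (y : Fin N → ℝ) :
    sampleCorr ξ y = ∑ i, (N : ℝ)⁻¹ * boolSign (ξ i) * y i := by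
  simp only [sampleCorr, mul_sum, mul_assoc]

lemma integral_le_measureReal_mul {α : Type*} [MeasurableSpace α] {μ : Measure α}
    [IsFiniteMeasure μ] {H : Set α} (hμ : μ Hᶜ = 0) {F : α → ℝ} (hF : Integrable F μ) {M : ℝ}
    (hM : ∀ g ∈ H, F g ≤ M) : ∫ g, F g ∂μ ≤ μ.real univ * M := by
  calc ∫ g, F g ∂μ ≤ ∫ _, M ∂μ := integral_mono_ae hF (integrable_const M) ((ae_iff.2 hμ).mono hM)
    _ = μ.real univ * M := by rw [integral_const, smul_eq_mul]

lemma integrable_relu_eval {H : Set C(K, ℝ)} {C : ℝ} (hH : ∀ g ∈ H, ∀ x, |g x| ≤ C)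
    {μ : Measure C(K, ℝ)} [IsFiniteMeasure μ] (hμ : μ Hᶜ = 0) (x : K) :
    Integrable (fun g : C(K, ℝ) => relu (g x)) μ := by
  refine .of_bound ((continuous_eval_const x).max continuous_const).aestronglyMeasurable
    C ((ae_iff.2 hμ).mono fun g hg => ?_)
  exact (abs_relu_le _).trans (hH g hg x)

lemma sum_mul_le_of_isBarronRep {H : Set C(K, ℝ)} {C : ℝ} (hH : ∀ g ∈ H, ∀ x, |g x| ≤ C)
    {f : C(K, ℝ)} {μp μn : Measure C(K, ℝ)} (hrep : IsBarronRep K H f μp μn) (S : Fin N → K)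
    (w : Fin N → ℝ) {M₁ M₂ : ℝ} (hM₁ : ∀ g ∈ H, ∑ i, w i * relu (g (S i)) ≤ M₁)
    (hM₂ : ∀ g ∈ H, -M₂ ≤ ∑ i, w i * relu (g (S i))) :
    ∑ i, w i * f (S i) ≤ μp.real univ * M₁ + μn.real univ * M₂ := by
  obtain ⟨hμp, hμn, hp, hn, hf⟩ := hrep
  have hint (μ : Measure C(K, ℝ)) [IsFiniteMeasure μ] (hμ : μ Hᶜ = 0) (i : Fin N) :
      Integrable (fun g : C(K, ℝ) => w i * relu (g (S i))) μ :=
    (integrable_relu_eval hH hμ (S i)).const_mul (w i)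
  have hsum : ∑ i, w i * f (S i)
      = ∫ g, ∑ i, w i * relu (g (S i)) ∂μp - ∫ g, ∑ i, w i * relu (g (S i)) ∂μn := by
    rw [integral_finsetSum _ fun i _ => hint μp hp i, integral_finsetSum _ fun i _ => hint μn hn i,
      ← sum_sub_distrib]
    refine sum_congr rfl fun i _ => ?_
    rw [hf, integral_const_mul, integral_const_mul, mul_sub]
  have hpos := integral_le_measureReal_mul hp (integrable_finsetSum _ fun i _ => hint μp hp i) hM₁
  have hneg := integral_le_measureReal_mul (F := fun g => -∑ i, w i * relu (g (S i))) hn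
    (integrable_finsetSum _ fun i _ => hint μn hn i).neg fun g hg => neg_le.1 (hM₂ g hg)
  rw [integral_neg] at hneg
  linarith

theorem ofReal_sum_mul_le_barronNorm_mul {H : Set C(K, ℝ)} {C : ℝ}
    (hH : ∀ g ∈ H, ∀ x, |g x| ≤ C) {f : C(K, ℝ)} (hf : barronNorm K H f ≠ ⊤) (S : Fin N → K)
    (w : Fin N → ℝ) {M₁ M₂ : ℝ} (hM₁ : ∀ g ∈ H, ∑ i, w i * relu (g (S i)) ≤ M₁)
    (hM₂ : ∀ g ∈ H, -M₂ ≤ ∑ i, w i * relu (g (S i))) :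
    ENNReal.ofReal (∑ i, w i * f (S i)) ≤ barronNorm K H f * ENNReal.ofReal (max M₁ M₂) := by
  have : Nonempty {p : Measure C(K, ℝ) × Measure C(K, ℝ) // IsBarronRep K H f p.1 p.2} := by
    by_contra h
    exact hf (@iInf_of_empty _ _ _ (not_nonempty_iff.1 h) _)
  rw [barronNorm, ENNReal.iInf_mul (by simp)]
  refine le_iInf fun ⟨⟨μp, μn⟩, hrep⟩ => ?_
  have := hrep.1
  have := hrep.2.1
  have hmass : μp.real univ * M₁ + μn.real univ * M₂
      ≤ (μp.real univ + μn.real univ) * max M₁ M₂ := by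
    rw [add_mul]
    gcongr
    exacts [le_max_left _ _, le_max_right _ _]
  calc ENNReal.ofReal (∑ i, w i * f (S i))
      ≤ ENNReal.ofReal ((μp.real univ + μn.real univ) * max M₁ M₂) :=
        ENNReal.ofReal_le_ofReal ((sum_mul_le_of_isBarronRep hH hrep S w hM₁ hM₂).trans hmass)
    _ = (μp univ + μn univ) * ENNReal.ofReal (max M₁ M₂) := by
        rw [ENNReal.ofReal_mul (by positivity), ENNReal.ofReal_add measureReal_nonneg
          measureReal_nonneg, ofReal_measureReal, ofReal_measureReal]

theorem sampleCorr_le_of_barronNorm_le_one {H : Set C(K, ℝ)} {C : ℝ}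
    (hH : ∀ g ∈ H, ∀ x, |g x| ≤ C) (h0 : 0 ∈ H) {f : C(K, ℝ)} (hf : barronNorm K H f ≤ 1)
    (S : Fin N → K) (ξ : Fin N → Bool) :
    sampleCorr ξ (fun i => f (S i))
      ≤ (⨆ g : H, sampleCorr ξ (fun i => relu ((g : C(K, ℝ)) (S i))))
        + ⨆ g : H, sampleCorr (fun i => !ξ i) (fun i => relu ((g : C(K, ℝ)) (S i))) := by
  set R : (Fin N → Bool) → ℝ :=
    fun η => ⨆ g : H, sampleCorr η (fun i => relu ((g : C(K, ℝ)) (S i)))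
  have hbdd (η : Fin N → Bool) :
      BddAbove (Set.range fun g : H => sampleCorr η (fun i => relu ((g : C(K, ℝ)) (S i)))) :=
    bddAbove_range_sampleCorr (fun g : H => (pi_norm_le_iff_of_nonneg (abs_nonneg C)).2 fun i =>
      ((abs_relu_le _).trans (hH g g.2 (S i))).trans (le_abs_self C)) η
  have hR_nonneg (η : Fin N → Bool) : 0 ≤ R η :=
    le_ciSup_of_le (hbdd η) ⟨0, h0⟩ (by simp [sampleCorr, relu])
  have hM₁ : ∀ g ∈ H, ∑ i, (N : ℝ)⁻¹ * boolSign (ξ i) * relu (g (S i)) ≤ R ξ := fun g hg => by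
    rw [← sampleCorr_eq_sum_mul]
    exact le_ciSup (hbdd ξ) ⟨g, hg⟩
  have hM₂ : ∀ g ∈ H, -R (fun i => !ξ i) ≤ ∑ i, (N : ℝ)⁻¹ * boolSign (ξ i) * relu (g (S i)) :=
    fun g hg => by
      have := le_ciSup (hbdd fun i => !ξ i) ⟨g, hg⟩
      rw [sampleCorr_not] at this
      rw [← sampleCorr_eq_sum_mul]
      linarith
  have hofReal := (ofReal_sum_mul_le_barronNorm_mul hH (hf.trans_lt ENNReal.one_lt_top).ne S _
    hM₁ hM₂).trans (mul_le_of_le_one_left bot_le hf)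
  rw [← sampleCorr_eq_sum_mul, ENNReal.ofReal_le_ofReal_iff
    ((hR_nonneg ξ).trans (le_max_left _ _))] at hofReal
  exact hofReal.trans (max_le_add_of_nonneg (hR_nonneg _) (hR_nonneg _))

end Barron

section RademacherAverage

lemma EReal.coe_finset_sum {β : Type*} (s : Finset β) (f : β → ℝ) :
    ((∑ i ∈ s, f i : ℝ) : EReal) = ∑ i ∈ s, (f i : EReal) :=
  map_sum (⟨⟨Real.toEReal, EReal.coe_zero⟩, EReal.coe_add⟩ : ℝ →+ EReal) f s

variable {α : Type*} {N : ℕ}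

lemma rademacher_le_coe_of_forall_le (H : Set (α → ℝ)) (S : Fin N → α)
    (B : (Fin N → Bool) → ℝ) (hB : ∀ ξ, ∀ h ∈ H, sampleCorr ξ (fun i => h (S i)) ≤ B ξ) :
    rademacher H S ≤ (((2 ^ N : ℝ)⁻¹ * ∑ ξ, B ξ : ℝ) : EReal) := by
  rw [EReal.coe_mul, EReal.coe_finset_sum]
  refine mul_le_mul_of_nonneg_left (Finset.sum_le_sum fun ξ _ => iSup₂_le fun h hh => ?_)
    (EReal.coe_nonneg.2 (by positivity))
  exact EReal.coe_le_coe_iff.2 (hB ξ h hh)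

lemma rademacher_range {β : Type*} [Nonempty β] (v : β → α → ℝ) (S : Fin N → α) {C : ℝ}
    (hv : ∀ b, ‖fun i => v b (S i)‖ ≤ C) :
    rademacher (Set.range v) S
      = (((2 ^ N : ℝ)⁻¹ * ∑ ξ, ⨆ b, sampleCorr ξ (fun i => v b (S i)) : ℝ) : EReal) := by
  rw [EReal.coe_mul, EReal.coe_finset_sum, rademacher]
  congr 1
  refine Finset.sum_congr rfl fun ξ _ => ?_
  rw [iSup_range, Monotone.map_ciSup_of_continuousAt continuous_coe_real_ereal.continuousAt
    (fun _ _ => EReal.coe_le_coe_iff.2) (bddAbove_range_sampleCorr hv ξ)]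
  rfl

lemma sum_comp_not {M : Type*} [AddCommMonoid M] (F : (Fin N → Bool) → M) :
    ∑ ξ : Fin N → Bool, F (fun i => !ξ i) = ∑ ξ, F ξ :=
  Equiv.sum_comp (Function.Involutive.toPerm (fun (ξ : Fin N → Bool) i => !ξ i)
    fun ξ => funext fun i => Bool.not_not (ξ i)) F

end RademacherAverage

section NormedBall

variable {d : ℕ} {K : Set (Fin d → ℝ)} {X : Type*} [SeminormedAddCommGroup X]

lemma abs_apply_le_of_mem_image_closedBall (ι : X → C(K, ℝ)) {C : ℝ}
    (hC : ∀ (g : X) (x : K), |ι g x| ≤ C * ‖g‖) :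
    ∀ g ∈ ι '' Metric.closedBall (0 : X) 1, ∀ x, |g x| ≤ |C| := by
  rintro _ ⟨g, hg, rfl⟩ x
  calc |ι g x| ≤ C * ‖g‖ := hC g x
    _ ≤ |C| * 1 := mul_le_mul (le_abs_self C) (mem_closedBall_zero_iff.1 hg) (norm_nonneg g)
        (abs_nonneg C)
    _ = |C| := mul_one _

lemma setOf_eq_range_image_closedBall (ι : X → C(K, ℝ)) :
    {h : K → ℝ | ∃ g : X, ‖g‖ ≤ 1 ∧ h = ι g}
      = Set.range fun g : ι '' Metric.closedBall (0 : X) 1 => ⇑(g : C(K, ℝ)) := by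
  ext h
  simp [eq_comm]

end NormedBall

theorem rademacher_barron_le_general {d : ℕ} (K : Set (Fin d → ℝ))
    {X : Type} [NormedAddCommGroup X] [NormedSpace ℝ X] (ι : X →ₗ[ℝ] C(K, ℝ)) (C₁ : ℝ)
    (hC₁ : ∀ (g : X) (x : K), |ι g x| ≤ C₁ * ‖g‖)
    {N : ℕ} (S : Fin N → K) :
    rademacher {h : K → ℝ | ∃ f : C(K, ℝ),
        barronNorm K (ι '' Metric.closedBall (0 : X) 1) f ≤ 1 ∧ h = ⇑f} S
      ≤ ((2 : ℝ) : EReal) * rademacher {h : K → ℝ | ∃ g : X, ‖g‖ ≤ 1 ∧ h = ⇑(ι g)} S := by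
  set H := ι '' Metric.closedBall (0 : X) 1
  have hH := abs_apply_le_of_mem_image_closedBall ι hC₁
  have h0 : (0 : C(K, ℝ)) ∈ H := ⟨0, Metric.mem_closedBall_self zero_le_one, map_zero ι⟩
  have : Nonempty H := ⟨⟨0, h0⟩⟩
  have hv (g : H) : ‖fun i => (g : C(K, ℝ)) (S i)‖ ≤ |C₁| :=
    (pi_norm_le_iff_of_nonneg (abs_nonneg C₁)).2 fun i => hH g g.2 (S i)
  set R : (Fin N → Bool) → ℝ :=
    fun ξ => ⨆ g : H, sampleCorr ξ (fun i => relu ((g : C(K, ℝ)) (S i)))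
  rw [setOf_eq_range_image_closedBall, rademacher_range _ S hv, ← EReal.coe_mul]
  calc rademacher _ S ≤ (((2 ^ N : ℝ)⁻¹ * ∑ ξ, (R ξ + R (fun i => !ξ i)) : ℝ) : EReal) :=
        rademacher_le_coe_of_forall_le _ S _ fun ξ => by
          rintro _ ⟨f, hf, rfl⟩
          exact sampleCorr_le_of_barronNorm_le_one hH h0 hf S ξ
    _ = ((2 * ((2 ^ N : ℝ)⁻¹ * ∑ ξ, R ξ) : ℝ) : EReal) := by
        rw [Finset.sum_add_distrib, sum_comp_not R]
        ring_nf
    _ ≤ _ := by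
        rw [EReal.coe_le_coe_iff]
        gcongr 2 * (_ * ?_)
        exact sum_iSup_sampleCorr_comp_le lipschitzWith_relu hv

/-- Let `F` be the closed unit ball of the generalized Barron space
`B_{X,K}` (viewed as a class of functions on `K`).  For every finite sample `S ⊆ K`,
`Rad(F; S) ≤ 2 · Rad(B^X; S)`, where `B^X` is the closed unit ball of `X` (realized as
functions on `K` via `ι`). -/
theorem rademacher_barron_le {d : ℕ} (K : Set (Fin d → ℝ)) (hK : IsCompact K)
    {X : Type} [NormedAddCommGroup X] [NormedSpace ℝ X] [CompleteSpace X]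
    (ι : X →ₗ[ℝ] C(K, ℝ)) (hinj : Function.Injective ι)
    (C₁ C₂ : ℝ) (hC₁pos : 0 < C₁) (hC₂pos : 0 < C₂)
    (hC₁ : ∀ (g : X) (x : K), |ι g x| ≤ C₁ * ‖g‖)
    (hC₂ : ∀ (g : X) (x y : K), |ι g x - ι g y| ≤ C₂ * ‖g‖ * dist x y)
    (hball : IsClosed (ι '' Metric.closedBall (0 : X) 1))
    {N : ℕ} (S : Fin N → K) :
    rademacher {h : K → ℝ | ∃ f : C(K, ℝ),
        barronNorm K (ι '' Metric.closedBall (0 : X) 1) f ≤ 1 ∧ h = ⇑f} S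
      ≤ ((2 : ℝ) : EReal) * rademacher {h : K → ℝ | ∃ g : X, ‖g‖ ≤ 1 ∧ h = ⇑(ι g)} S :=
  rademacher_barron_le_general K ι C₁ hC₁ S
end

section
/- Let f be a finite fully connected ReLU network with L hidden layers, f(x) = Σ_{i_L=1}^{m_L} a^L_{i_L} σ( Σ_{i_{L−1}=1}^{m_{L−1}} a^{L−1}_{i_L i_{L−1}} σ( ⋯ σ( Σ_{i_1=1}^{m_1} a¹_{i_2 i_1} σ( Σ_{i_0=1}^{d+1} a⁰_{i_1 i_0} x_{i_0} ) ) ⋯ ) ) ), where x_{d+1} := 1. Then f ∈ W^L(K) and ‖f‖_{W^L(K)} ≤ Σ_{i_L=1}^{m_L} ⋯ Σ_{i_1=1}^{m_1} Σ_{i_0=1}^{d+1} | a^L_{i_L} a^{L−1}_{i_L i_{L−1}} ⋯ a⁰_{i_1 i_0} | (the path-norm proxy of the weights). -/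
open MeasureTheory Set Filter Topology
open scoped ENNReal NNReal Classical

noncomputable section

/-- The neural tree norm `‖·‖_{W^L(K)}`. For `L = 0` it is the norm `‖w‖_{ℓ¹} + |b|` of the
space of affine functions `x ↦ wᵀx + b`; for `L ≥ 1`, `W^L(K) = B_{W^{L-1}(K), K}` is the
generalized Barron space modelled on `X = W^{L-1}(K)`, whose unit ball is
`{g : treeNorm K (L-1) g ≤ 1}`.  A continuous function `f` belongs to `W^L(K)` iff
`treeNorm K L f ≠ ∞`. -/
def treeNorm {d : ℕ} (K : Set (Fin d → ℝ)) : ℕ → C(K, ℝ) → ℝ≥0∞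
  | 0, f =>
    ⨅ p : {p : (Fin d → ℝ) × ℝ //
        ∀ x : K, f x = (∑ i : Fin d, p.1 i * (x : Fin d → ℝ) i) + p.2},
      ENNReal.ofReal ((∑ i : Fin d, |p.1.1 i|) + |p.1.2|)
  | (L + 1), f => barronNorm K {g : C(K, ℝ) | treeNorm K L g ≤ 1} f

/-- Hidden unit values of a fully connected ReLU network: `hiddenLayer d m a x ℓ j` is the
output of the `j`-th unit in the `(ℓ+1)`-th hidden layer (of width `m (ℓ+1)`), on input `x`
(with the convention `x_{d+1} = 1` handled by the bias weight `a 0 j d`). -/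
def hiddenLayer (d : ℕ) (m : ℕ → ℕ) (a : ℕ → ℕ → ℕ → ℝ) (x : Fin d → ℝ) : ℕ → ℕ → ℝ
  | 0, j => relu ((∑ i : Fin d, a 0 j i.val * x i) + a 0 j d)
  | (ℓ + 1), j => relu (∑ i ∈ Finset.range (m (ℓ + 1)), a (ℓ + 1) j i * hiddenLayer d m a x ℓ i)

/-- Realization of a finite fully connected ReLU network with `L ≥ 1` hidden layers,
hidden-layer widths `m 1, …, m L`, outer coefficients `c` and weights `a`. -/
def netRealize (d L : ℕ) (m : ℕ → ℕ) (c : ℕ → ℝ) (a : ℕ → ℕ → ℕ → ℝ) (x : Fin d → ℝ) : ℝ :=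
  ∑ i ∈ Finset.range (m L), c i * hiddenLayer d m a x (L - 1) i

/-- Sum over all paths below a given hidden unit of the products of absolute weights. -/
def pathBelow (d : ℕ) (m : ℕ → ℕ) (a : ℕ → ℕ → ℕ → ℝ) : ℕ → ℕ → ℝ
  | 0, j => ∑ i ∈ Finset.range (d + 1), |a 0 j i|
  | (ℓ + 1), j => ∑ i ∈ Finset.range (m (ℓ + 1)), |a (ℓ + 1) j i| * pathBelow d m a ℓ i

/-- The path-norm proxy `Σ_{i_L,…,i_0} |a^L_{i_L} a^{L-1}_{i_L i_{L-1}} ⋯ a⁰_{i_1 i_0}|`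
of a finite ReLU network with `L ≥ 1` hidden layers. -/
def pathProxy (d L : ℕ) (m : ℕ → ℕ) (c : ℕ → ℝ) (a : ℕ → ℕ → ℕ → ℝ) : ℝ :=
  ∑ i ∈ Finset.range (m L), |c i| * pathBelow d m a (L - 1) i

end

/-!
A finite combination `∑ bᵢ relu(gᵢ)` with `‖gᵢ‖_{W^ℓ} ≤ tᵢ` is represented over the unit
ball of `W^ℓ(K)` by the atomic measure `∑ bᵢ tᵢ δ_{gᵢ/tᵢ}` (positive homogeneity of `relu`),
whose total variation is `∑ |bᵢ| tᵢ`. By induction on the layer, the pre-activation of a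
unit of hidden layer `ℓ + 1` therefore lies in `W^ℓ(K)` with norm at most the path sum below
that unit, and the network is such a combination of the top-layer pre-activations.
-/

@[simp]
theorem relu_zero : relu 0 = 0 := max_self 0

@[fun_prop]
theorem continuous_relu : Continuous relu := continuous_id.max continuous_const

theorem relu_mul_of_nonneg {c : ℝ} (hc : 0 ≤ c) (z : ℝ) : relu (c * z) = c * relu z := by
  rw [relu, relu, mul_max_of_nonneg _ _ hc, mul_zero]

theorem ENNReal.ofReal_add_ofReal_neg (z : ℝ) :
    ENNReal.ofReal z + ENNReal.ofReal (-z) = ENNReal.ofReal |z| := by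
  rw [← max_zero_add_max_neg_zero_eq_abs_self,
    ENNReal.ofReal_add (le_max_right _ _) (le_max_right _ _)]
  simp

instance ctsBorelSpace {d : ℕ} (K : Set (Fin d → ℝ)) : BorelSpace C(K, ℝ) := ⟨rfl⟩

section Barron

variable {d : ℕ} {K : Set (Fin d → ℝ)} {ι : Type*}

theorem measure_sum_smul_dirac_apply (s : Finset ι) (w : ι → ℝ≥0∞) (h : ι → C(K, ℝ))
    (A : Set C(K, ℝ)) :
    (∑ i ∈ s, w i • Measure.dirac (h i)) A = ∑ i ∈ s, w i * A.indicator 1 (h i) := by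
  simp only [Measure.finsetSum_apply, Measure.smul_apply, smul_eq_mul, Measure.dirac_apply]

theorem integral_relu_sum_smul_dirac (s : Finset ι) (w : ι → ℝ) (h : ι → C(K, ℝ)) (x : K) :
    ∫ g, relu (g x) ∂(∑ i ∈ s, ENNReal.ofReal (w i) • Measure.dirac (h i)) =
      ∑ i ∈ s, max (w i) 0 * relu (h i x) := by
  rw [integral_finsetSum_measure fun i _ =>
    (integrable_dirac enorm_lt_top).smul_measure ENNReal.ofReal_ne_top]
  simp only [integral_smul_measure, integral_dirac, smul_eq_mul, ENNReal.toReal_ofReal']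

theorem barronNorm_le_of_eq_sum_relu (H : Set C(K, ℝ)) (s : Finset ι) (b : ι → ℝ)
    (h : ι → C(K, ℝ)) (hH : ∀ i ∈ s, h i ∈ H) (f : C(K, ℝ))
    (hf : ∀ x, f x = ∑ i ∈ s, b i * relu (h i x)) :
    barronNorm K H f ≤ ENNReal.ofReal (∑ i ∈ s, |b i|) := by
  set μ : (ι → ℝ) → Measure C(K, ℝ) := fun w =>
    ∑ i ∈ s, ENNReal.ofReal (w i) • Measure.dirac (h i)
  have hfinite (w : ι → ℝ) : IsFiniteMeasure (μ w) := by
    constructor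
    simp [μ, measure_sum_smul_dirac_apply, ENNReal.sum_lt_top]
  have hconc (w : ι → ℝ) : μ w Hᶜ = 0 := by
    simp only [μ, measure_sum_smul_dirac_apply]
    exact Finset.sum_eq_zero fun i hi => by simp [hH i hi]
  have hrep : IsBarronRep K H f (μ b) (μ (-b)) := by
    refine ⟨hfinite b, hfinite (-b), hconc b, hconc (-b), fun x => ?_⟩
    simp only [μ, integral_relu_sum_smul_dirac, hf x, ← Finset.sum_sub_distrib, ← sub_mul,
      Pi.neg_apply, max_zero_sub_max_neg_zero_eq_self]
  refine iInf_le_of_le ⟨(μ b, μ (-b)), hrep⟩ (le_of_eq ?_)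
  simp only [μ, measure_sum_smul_dirac_apply, Set.indicator_univ, Pi.one_apply, mul_one,
    ← Finset.sum_add_distrib, Pi.neg_apply]
  rw [ENNReal.ofReal_sum_of_nonneg fun i _ => abs_nonneg _]
  exact Finset.sum_congr rfl fun i _ => ENNReal.ofReal_add_ofReal_neg (b i)

theorem barronNorm_zero (H : Set C(K, ℝ)) : barronNorm K H 0 = 0 :=
  nonpos_iff_eq_zero.mp <| iInf_le_of_le
    ⟨(0, 0), inferInstance, inferInstance, rfl, rfl, fun x => by simp⟩ (by simp)

theorem barronNorm_smul_le (H : Set C(K, ℝ)) (f : C(K, ℝ)) {s : ℝ} (hs : 0 < s) :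
    barronNorm K H (s • f) ≤ ENNReal.ofReal s * barronNorm K H f := by
  rw [barronNorm, barronNorm, ENNReal.mul_iInf_of_ne (by simpa using hs) ENNReal.ofReal_ne_top]
  refine le_iInf fun p => ?_
  obtain ⟨⟨μp, μn⟩, hfin_p, hfin_n, hconc_p, hconc_n, hrep⟩ := p
  refine iInf_le_of_le ⟨(ENNReal.ofReal s • μp, ENNReal.ofReal s • μn),
    μp.smul_finite ENNReal.ofReal_ne_top, μn.smul_finite ENNReal.ofReal_ne_top,
    by simp [hconc_p], by simp [hconc_n], fun x => ?_⟩ (by simp [mul_add])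
  simp only [integral_smul_measure, ENNReal.toReal_ofReal hs.le, ContinuousMap.smul_apply,
    smul_eq_mul, hrep x]
  ring

end Barron

section TreeNorm

variable {d : ℕ} {K : Set (Fin d → ℝ)}

theorem treeNorm_zero_le_of_eq_affine (f : C(K, ℝ)) (w : Fin d → ℝ) (b : ℝ)
    (hf : ∀ x : K, f x = (∑ i, w i * (x : Fin d → ℝ) i) + b) :
    treeNorm K 0 f ≤ ENNReal.ofReal ((∑ i, |w i|) + |b|) :=
  iInf_le_of_le ⟨(w, b), hf⟩ le_rfl

@[simp]
theorem treeNorm_apply_zero : ∀ ℓ, treeNorm K ℓ (0 : C(K, ℝ)) = 0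
  | 0 => nonpos_iff_eq_zero.mp <| (treeNorm_zero_le_of_eq_affine 0 0 0 fun x => by simp).trans (by simp)
  | ℓ + 1 => barronNorm_zero _

theorem treeNorm_smul_le (ℓ : ℕ) (g : C(K, ℝ)) {s : ℝ} (hs : 0 < s) :
    treeNorm K ℓ (s • g) ≤ ENNReal.ofReal s * treeNorm K ℓ g := by
  cases ℓ with
  | zero =>
    rw [treeNorm, treeNorm, ENNReal.mul_iInf_of_ne (by simpa using hs) ENNReal.ofReal_ne_top]
    refine le_iInf fun ⟨⟨w, b⟩, hg⟩ => ?_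
    refine (treeNorm_zero_le_of_eq_affine _ (s • w) (s * b) fun x => ?_).trans (le_of_eq ?_)
    · simp [hg x, mul_add, Finset.mul_sum, mul_assoc]
    · rw [← ENNReal.ofReal_mul hs.le]
      simp [mul_add, Finset.mul_sum, abs_mul, abs_of_pos hs]
  | succ ℓ => exact barronNorm_smul_le _ g hs

theorem treeNorm_succ_le_of_eq_sum_relu {ι : Type*} (ℓ : ℕ) (s : Finset ι) (b t : ι → ℝ)
    (g : ι → C(K, ℝ)) (ht : ∀ i ∈ s, 0 ≤ t i)
    (hg : ∀ i ∈ s, treeNorm K ℓ (g i) ≤ ENNReal.ofReal (t i))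
    (hg0 : ∀ i ∈ s, t i = 0 → g i = 0) (F : C(K, ℝ))
    (hF : ∀ x, F x = ∑ i ∈ s, b i * relu (g i x)) :
    treeNorm K (ℓ + 1) F ≤ ENNReal.ofReal (∑ i ∈ s, |b i| * t i) := by
  have hnormalized : ∀ i ∈ s, treeNorm K ℓ ((t i)⁻¹ • g i) ≤ 1 := by
    intro i hi
    rcases (ht i hi).eq_or_lt with h0 | hpos
    · simp [← h0]
    · calc treeNorm K ℓ ((t i)⁻¹ • g i)
          ≤ ENNReal.ofReal (t i)⁻¹ * ENNReal.ofReal (t i) :=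
            (treeNorm_smul_le ℓ (g i) (inv_pos.mpr hpos)).trans (by gcongr; exact hg i hi)
        _ = 1 := by
          rw [← ENNReal.ofReal_mul (by positivity), inv_mul_cancel₀ hpos.ne', ENNReal.ofReal_one]
  have hrescale : ∀ i ∈ s, ∀ x,
      b i * relu (g i x) = b i * t i * relu (((t i)⁻¹ • g i) x) := by
    intro i hi x
    rcases (ht i hi).eq_or_lt with h0 | hpos
    · simp [hg0 i hi h0.symm]
    · rw [ContinuousMap.smul_apply, smul_eq_mul, relu_mul_of_nonneg (inv_nonneg.mpr hpos.le)]
      field_simp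
  calc treeNorm K (ℓ + 1) F
      ≤ ENNReal.ofReal (∑ i ∈ s, |b i * t i|) :=
        barronNorm_le_of_eq_sum_relu _ s _ _ hnormalized F fun x => by
          rw [hF x]; exact Finset.sum_congr rfl fun i hi => hrescale i hi x
    _ = ENNReal.ofReal (∑ i ∈ s, |b i| * t i) := by
      congr 1
      exact Finset.sum_congr rfl fun i hi => by rw [abs_mul, abs_of_nonneg (ht i hi)]

end TreeNorm

section Network

variable (d : ℕ) (m : ℕ → ℕ) (a : ℕ → ℕ → ℕ → ℝ)

def preactivation : ℕ → ℕ → (Fin d → ℝ) → ℝ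
  | 0, j, x => (∑ i : Fin d, a 0 j i * x i) + a 0 j d
  | ℓ + 1, j, x => ∑ i ∈ Finset.range (m (ℓ + 1)), a (ℓ + 1) j i * relu (preactivation ℓ i x)

theorem hiddenLayer_eq_relu_preactivation (x : Fin d → ℝ) :
    ∀ ℓ j, hiddenLayer d m a x ℓ j = relu (preactivation d m a ℓ j x)
  | 0, j => rfl
  | ℓ + 1, j => by
    simp only [hiddenLayer, preactivation, hiddenLayer_eq_relu_preactivation x ℓ]

theorem continuous_preactivation : ∀ ℓ j, Continuous (preactivation d m a ℓ j)
  | 0, j => by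
    simp only [preactivation]
    fun_prop
  | ℓ + 1, j => by
    have := continuous_preactivation ℓ
    simp only [preactivation]
    fun_prop

theorem continuous_netRealize (L : ℕ) (c : ℕ → ℝ) : Continuous (netRealize d L m c a) := by
  have := continuous_preactivation d m a (L - 1)
  unfold netRealize
  simp only [hiddenLayer_eq_relu_preactivation]
  fun_prop

theorem pathBelow_nonneg : ∀ ℓ j, 0 ≤ pathBelow d m a ℓ j
  | 0, _ => Finset.sum_nonneg fun _ _ => abs_nonneg _
  | ℓ + 1, _ => Finset.sum_nonneg fun i _ =>
    mul_nonneg (abs_nonneg _) (pathBelow_nonneg ℓ i)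

theorem preactivation_eq_zero_of_pathBelow_eq_zero :
    ∀ ℓ j, pathBelow d m a ℓ j = 0 → preactivation d m a ℓ j = 0
  | 0, j, h => by
    have ha := (Finset.sum_eq_zero_iff_of_nonneg fun i _ => abs_nonneg _).mp h
    ext x
    simp [preactivation, fun i : Fin d => abs_eq_zero.mp (ha i (by simp)),
      abs_eq_zero.mp (ha d (by simp))]
  | ℓ + 1, j, h => by
    have ha := (Finset.sum_eq_zero_iff_of_nonneg fun i _ =>
      mul_nonneg (abs_nonneg _) (pathBelow_nonneg d m a ℓ i)).mp h
    ext x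
    refine Finset.sum_eq_zero fun i hi => ?_
    rcases mul_eq_zero.mp (ha i hi) with ha0 | hp0
    · simp [abs_eq_zero.mp ha0]
    · simp [preactivation_eq_zero_of_pathBelow_eq_zero ℓ i hp0]

end Network

section NetworkOn

variable {d : ℕ} (K : Set (Fin d → ℝ)) (m : ℕ → ℕ) (a : ℕ → ℕ → ℕ → ℝ)

def preactivationOn (ℓ j : ℕ) : C(K, ℝ) :=
  ContinuousMap.restrict K ⟨preactivation d m a ℓ j, continuous_preactivation d m a ℓ j⟩

theorem preactivationOn_eq_zero_of_pathBelow_eq_zero {ℓ j : ℕ} (h : pathBelow d m a ℓ j = 0) :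
    preactivationOn K m a ℓ j = 0 := by
  ext x
  simp [preactivationOn, preactivation_eq_zero_of_pathBelow_eq_zero d m a ℓ j h]

theorem treeNorm_preactivationOn_le :
    ∀ ℓ j, treeNorm K ℓ (preactivationOn K m a ℓ j) ≤ ENNReal.ofReal (pathBelow d m a ℓ j)
  | 0, j => by
    refine (treeNorm_zero_le_of_eq_affine _ (a 0 j ·) (a 0 j d) fun _ => rfl).trans_eq ?_
    rw [pathBelow, Finset.sum_range_succ, Fin.sum_univ_eq_sum_range (fun i => |a 0 j i|)]
  | ℓ + 1, j => by
    rw [pathBelow]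
    exact treeNorm_succ_le_of_eq_sum_relu ℓ _ (a (ℓ + 1) j) (pathBelow d m a ℓ)
      (preactivationOn K m a ℓ) (fun i _ => pathBelow_nonneg d m a ℓ i)
      (fun i _ => treeNorm_preactivationOn_le ℓ i)
      (fun _ _ => preactivationOn_eq_zero_of_pathBelow_eq_zero K m a)
      _ fun x => rfl

end NetworkOn

theorem finite_network_mem_treeSpace_general {d : ℕ} (K : Set (Fin d → ℝ))
    (L : ℕ) (hL : 1 ≤ L) (m : ℕ → ℕ) (c : ℕ → ℝ) (a : ℕ → ℕ → ℕ → ℝ) :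
    ∃ F : C(K, ℝ), (∀ x : K, F x = netRealize d L m c a (x : Fin d → ℝ)) ∧
      treeNorm K L F ≤ ENNReal.ofReal (pathProxy d L m c a) := by
  obtain ⟨L, rfl⟩ := Nat.exists_eq_add_of_le' hL
  refine ⟨ContinuousMap.restrict K ⟨_, continuous_netRealize d m a (L + 1) c⟩, fun x => rfl, ?_⟩
  rw [pathProxy, Nat.add_sub_cancel]
  refine treeNorm_succ_le_of_eq_sum_relu L _ c _ (preactivationOn K m a L)
    (fun i _ => pathBelow_nonneg d m a L i) (fun i _ => treeNorm_preactivationOn_le K m a L i)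
    (fun _ _ => preactivationOn_eq_zero_of_pathBelow_eq_zero K m a)
    _ fun x => ?_
  simp [netRealize, hiddenLayer_eq_relu_preactivation, preactivationOn]

/-- Every finite fully connected ReLU network `f` with `L ≥ 1` hidden
layers belongs to the neural tree space `W^L(K)` and its norm is bounded by the
path-norm proxy `Σ_{i_L,…,i_0} |a^L_{i_L} a^{L-1}_{i_L i_{L-1}} ⋯ a⁰_{i_1 i_0}|`. -/
theorem finite_network_mem_treeSpace {d : ℕ} (K : Set (Fin d → ℝ)) (hK : IsCompact K)
    (L : ℕ) (hL : 1 ≤ L) (m : ℕ → ℕ) (c : ℕ → ℝ) (a : ℕ → ℕ → ℕ → ℝ) :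
    ∃ F : C(K, ℝ), (∀ x : K, F x = netRealize d L m c a (x : Fin d → ℝ)) ∧
      treeNorm K L F ≤ ENNReal.ofReal (pathProxy d L m c a) :=
  finite_network_mem_treeSpace_general K L hL m c a
end
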